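/- arXiv:2406.10036 — 2 statements merged into one kernel-verified Lean document; each statement's English description precedes it below -/
import Mathlib

section
/- Perfect realism doubles the distortion under posterior sampling: let X be a square-integrable random vector, m a random variable (the message), X̃ = E[X|m], and let X̂ be drawn conditionally i.i.d. with X given m, i.e., X̂ ⊥ X | m and P_{X̂|m} = P_{X|m}. Then E[‖X − X̂‖²] = 2 E[‖X − X̃‖²]. -/
/-!
Write `X̃ = E[X|m]`. Expanding squares, `E‖X - X̂‖² = E‖X‖² + E‖X̂‖² - 2 E⟪X, X̂⟫` and
`E‖X - X̃‖² = E‖X‖² - E‖X̃‖²`, the latter because the pull-out property gives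
`E⟪X, X̃⟫ = E‖X̃‖²`. Equal conditional laws give `E‖X̂‖² = E‖X‖²` and `E[X̂|m] = X̃`. For the cross
term, `X` and `X̂` are independent under the conditional expectation kernel at almost every point,
so `E[⟪X, X̂⟫|m] = ⟪X̃, E[X̂|m]⟫ = ‖X̃‖²`. Hence both sides equal `2 (E‖X‖² - E‖X̃‖²)`.
-/

open MeasureTheory ProbabilityTheory
open scoped InnerProductSpace

section

variable {Ω E : Type*} {mΩ : MeasurableSpace Ω} {μ : Measure Ω}
  [NormedAddCommGroup E] [InnerProductSpace ℝ E]

lemma MeasureTheory.MemLp.integrable_inner {f g : Ω → E} (hf : MemLp f 2 μ)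
    (hg : MemLp g 2 μ) : Integrable (fun ω ↦ ⟪f ω, g ω⟫_ℝ) μ :=
  memLp_one_iff_integrable.1 <| hf.of_bilin (fun a b ↦ ⟪a, b⟫_ℝ) 1 hg (hf.1.inner hg.1)
    (ae_of_all _ fun _ ↦ by simpa using nnnorm_inner_le_nnnorm (𝕜 := ℝ) _ _)

lemma MeasureTheory.integral_norm_sub_sq {f g : Ω → E} (hf : MemLp f 2 μ) (hg : MemLp g 2 μ) :
    ∫ ω, ‖f ω - g ω‖ ^ 2 ∂μ
      = ∫ ω, ‖f ω‖ ^ 2 ∂μ + ∫ ω, ‖g ω‖ ^ 2 ∂μ - 2 * ∫ ω, ⟪f ω, g ω⟫_ℝ ∂μ := by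
  have hf2 := (memLp_two_iff_integrable_sq_norm hf.1).1 hf
  have hg2 := (memLp_two_iff_integrable_sq_norm hg.1).1 hg
  have hfg := (hf.integrable_inner hg).const_mul 2
  have hf2_sub : Integrable (fun ω ↦ ‖f ω‖ ^ 2 - 2 * ⟪f ω, g ω⟫_ℝ) μ := hf2.sub hfg
  simp_rw [norm_sub_sq_real]
  rw [integral_add hf2_sub hg2, integral_sub hf2 hfg, integral_const_mul]
  ring

lemma MeasureTheory.integral_inner_condExp_self [CompleteSpace E] {m : MeasurableSpace Ω}
    (hm : m ≤ mΩ) [IsFiniteMeasure μ] {X : Ω → E} (hX : MemLp X 2 μ) :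
    ∫ ω, ⟪X ω, μ[X | m] ω⟫_ℝ ∂μ = ∫ ω, ‖μ[X | m] ω‖ ^ 2 ∂μ := by
  have hT : MemLp (μ[X | m]) 2 μ := hX.condExp one_le_two
  have hpull := condExp_bilin_of_stronglyMeasurable_left (innerSL ℝ) stronglyMeasurable_condExp
    (hT.integrable_inner hX) (hX.integrable one_le_two)
  calc ∫ ω, ⟪X ω, μ[X | m] ω⟫_ℝ ∂μ = ∫ ω, ⟪μ[X | m] ω, X ω⟫_ℝ ∂μ := by
        simp_rw [real_inner_comm]
    _ = ∫ ω, (μ[fun ω ↦ ⟪μ[X | m] ω, X ω⟫_ℝ | m]) ω ∂μ := (integral_condExp hm).symm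
    _ = ∫ ω, ‖μ[X | m] ω‖ ^ 2 ∂μ :=
        integral_congr_ae (hpull.mono fun ω hω ↦ hω.trans (real_inner_self_eq_norm_sq _))

end

section

variable {Ω β F : Type*} {mΩ : MeasurableSpace Ω} {μ : Measure Ω} [IsFiniteMeasure μ]
  [MeasurableSpace β] {m : Ω → β}

lemma ProbabilityTheory.identDistrib_of_condDistrib_eq [MeasurableSpace F]
    [StandardBorelSpace F] [Nonempty F] {X Y : Ω → F} (hX : AEMeasurable X μ)
    (hY : AEMeasurable Y μ) (hm : AEMeasurable m μ) (h : condDistrib Y m μ = condDistrib X m μ) :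
    IdentDistrib X Y μ μ where
  aemeasurable_fst := hX
  aemeasurable_snd := hY
  map_eq := by rw [← condDistrib_comp_map hm hX, ← condDistrib_comp_map hm hY, h]

lemma ProbabilityTheory.condExp_comap_ae_eq_of_condDistrib_eq [NormedAddCommGroup F]
    [NormedSpace ℝ F] [CompleteSpace F] [MeasurableSpace F] [BorelSpace F]
    [SecondCountableTopology F] {X Y : Ω → F} (hm : Measurable m)
    (hX : Integrable X μ) (hY : Integrable Y μ) (h : condDistrib Y m μ = condDistrib X m μ) :
    μ[Y | MeasurableSpace.comap m inferInstance]
      =ᵐ[μ] μ[X | MeasurableSpace.comap m inferInstance] := by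
  filter_upwards [condExp_ae_eq_integral_condDistrib' hm hY,
    condExp_ae_eq_integral_condDistrib' hm hX] with ω hYω hXω
  rw [hYω, hXω, h]

end

section

variable {Ω : Type*} {m' mΩ : MeasurableSpace Ω} [StandardBorelSpace Ω] {hm' : m' ≤ mΩ}
  {μ : Measure Ω} [IsFiniteMeasure μ]

lemma ProbabilityTheory.CondIndepFun.ae_indepFun_condExpKernel {β β' : Type*}
    [MeasurableSpace β] [MeasurableSpace β']
    [MeasurableSpace.CountableOrCountablyGenerated Ω (β × β')]
    {f : Ω → β} {g : Ω → β'} (hf : Measurable f) (hg : Measurable g)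
    (h : CondIndepFun m' hm' f g μ) :
    ∀ᵐ ω ∂μ, IndepFun f g (condExpKernel μ m' ω) := by
  filter_upwards [ae_of_ae_trim hm' ((condIndepFun_iff_map_prod_eq_prod_map_map hf hg).1 h)]
    with ω hω
  rw [indepFun_iff_map_prod_eq_prod_map_map hf.aemeasurable hg.aemeasurable]
  rwa [Kernel.map_apply _ (hf.prodMk hg), Kernel.prod_apply, Kernel.map_apply _ hf,
    Kernel.map_apply _ hg] at hω

lemma ProbabilityTheory.CondIndepFun.condExp_bilin_ae_eq {E F G : Type*}
    [NormedAddCommGroup E] [NormedSpace ℝ E] [CompleteSpace E] [MeasurableSpace E]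
    [BorelSpace E] [SecondCountableTopology E]
    [NormedAddCommGroup F] [NormedSpace ℝ F] [CompleteSpace F] [MeasurableSpace F]
    [BorelSpace F] [SecondCountableTopology F]
    [NormedAddCommGroup G] [NormedSpace ℝ G] [CompleteSpace G]
    {X : Ω → E} {Y : Ω → F} (hXY : CondIndepFun m' hm' X Y μ)
    (hXm : Measurable X) (hYm : Measurable Y) (hX : Integrable X μ) (hY : Integrable Y μ)
    (B : E →L[ℝ] F →L[ℝ] G) (hB : Integrable (fun ω ↦ B (X ω) (Y ω)) μ) :
    μ[fun ω ↦ B (X ω) (Y ω) | m'] =ᵐ[μ] fun ω ↦ B (μ[X | m'] ω) (μ[Y | m'] ω) := by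
  filter_upwards [hXY.ae_indepFun_condExpKernel hXm hYm,
    condExp_ae_eq_integral_condExpKernel hm' hB, condExp_ae_eq_integral_condExpKernel hm' hX,
    condExp_ae_eq_integral_condExpKernel hm' hY, hX.condExpKernel_ae, hY.condExpKernel_ae]
    with ω hind hBω hXω hYω hXi hYi
  rw [hBω, hXω, hYω, hind.integral_bilin hXi hYi]

end

/-- Posterior sampling doubles the distortion: if `X̂` is conditionally independent of `X`
given the message `m` and has the same conditional law given `m`, then
`E[‖X − X̂‖²] = 2 E[‖X − E[X|m]‖²]`. -/
theorem stmt_7 {Ω β : Type*} [MeasurableSpace Ω] [StandardBorelSpace Ω] [MeasurableSpace β]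
    {μ : Measure Ω} [IsProbabilityMeasure μ] {n : ℕ}
    (X Xhat : Ω → EuclideanSpace ℝ (Fin n)) (m : Ω → β)
    (hX : Measurable X) (hXhat : Measurable Xhat) (hm : Measurable m)
    (hX2 : MemLp X 2 μ) (hXhat2 : MemLp Xhat 2 μ)
    (hci : CondIndepFun (MeasurableSpace.comap m inferInstance) hm.comap_le X Xhat μ)
    (hdist : condDistrib Xhat m μ = condDistrib X m μ) :
    ∫ ω, ‖X ω - Xhat ω‖ ^ 2 ∂μ
      = 2 * ∫ ω, ‖X ω - (μ[X | MeasurableSpace.comap m inferInstance]) ω‖ ^ 2 ∂μ := by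
  set T := μ[X | MeasurableSpace.comap m inferInstance]
  have hXi := hX2.integrable one_le_two
  have hXhati := hXhat2.integrable one_le_two
  have hsame_law : IdentDistrib X Xhat μ μ :=
    identDistrib_of_condDistrib_eq hX.aemeasurable hXhat.aemeasurable hm.aemeasurable hdist
  have hsame_norm : ∫ ω, ‖Xhat ω‖ ^ 2 ∂μ = ∫ ω, ‖X ω‖ ^ 2 ∂μ :=
    (hsame_law.comp (u := fun v ↦ ‖v‖ ^ 2) (by fun_prop)).integral_eq.symm
  have hcross : ∫ ω, ⟪X ω, Xhat ω⟫_ℝ ∂μ = ∫ ω, ‖T ω‖ ^ 2 ∂μ := by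
    have hfactor := hci.condExp_bilin_ae_eq hX hXhat hXi hXhati (innerSL ℝ)
      (hX2.integrable_inner hXhat2)
    rw [← integral_condExp hm.comap_le]
    refine integral_congr_ae ?_
    filter_upwards [hfactor, condExp_comap_ae_eq_of_condDistrib_eq hm hXi hXhati hdist]
      with ω hω hsame
    exact hω.trans (by rw [hsame]; exact real_inner_self_eq_norm_sq (T ω))
  rw [integral_norm_sub_sq hX2 hXhat2, integral_norm_sub_sq hX2 (hX2.condExp one_le_two),
    hsame_norm, hcross, integral_inner_condExp_self hm.comap_le hX2]
  ring
end

section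
/- Triangle-type bound for the distortion-perception tradeoff at a given encoder: if E[‖X − X̃‖²] = D₀ and the reconstruction X̂ is required to satisfy W₂(P_X, P_{X̂}) ≤ √P and to be a function of X̃ (through a coupling achieving optimal transport from P_{X̃} to P_{X̂}), then E[‖X − X̂‖²] ≥ D₀ + ((W₂(P_X, P_{X̃}) − √P)₊)². -/
open MeasureTheory

/-- Squared Wasserstein-2 distance between two Borel probability measures on `ℝⁿ`,
defined as the infimum of the quadratic transport cost over all couplings. -/
noncomputable def W2sq {n : ℕ}
    (p q : Measure (EuclideanSpace ℝ (Fin n))) : ℝ :=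
  sInf { r : ℝ | ∃ π : Measure (EuclideanSpace ℝ (Fin n) × EuclideanSpace ℝ (Fin n)),
    π.map Prod.fst = p ∧ π.map Prod.snd = q ∧ r = ∫ z, ‖z.1 - z.2‖ ^ 2 ∂π }

/-!
`X̃ = E[X | m]` is the orthogonal projection of `X` onto the `m`-measurable part of `L²`, and
`f(X̃)` lies in that subspace, so Pythagoras gives `E‖X − f(X̃)‖² = D₀ + E‖X̃ − f(X̃)‖²`.
On the other side, `(f(X̃), X̃)` is a coupling, so `W₂(P_{f(X̃)}, P_{X̃}) ≤ ‖f(X̃) − X̃‖_{L²}`,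
and the triangle inequality for `W₂` gives `W₂(P_X, P_{X̃}) ≤ √P + ‖X̃ − f(X̃)‖_{L²}`.
The triangle inequality is proved by gluing two couplings along their common marginal
(disintegrating the second one) and applying Minkowski's inequality in `L²` of the glued measure.
-/

open ProbabilityTheory

section L2

variable {α E : Type*} [NormedAddCommGroup E] [InnerProductSpace ℝ E]

theorem MeasureTheory.MemLp.integral_norm_sq_eq [MeasurableSpace α] {μ : Measure α} {f : α → E}
    (hf : MemLp f 2 μ) : ∫ a, ‖f a‖ ^ 2 ∂μ = ‖hf.toLp f‖ ^ 2 := by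
  rw [← real_inner_self_eq_norm_sq, L2.inner_def]
  refine integral_congr_ae ?_
  filter_upwards [hf.coeFn_toLp] with a ha
  rw [ha, real_inner_self_eq_norm_sq]

theorem sqrt_integral_norm_add_sq_le [MeasurableSpace α] {μ : Measure α} {f g : α → E}
    (hf : MemLp f 2 μ) (hg : MemLp g 2 μ) :
    √(∫ a, ‖f a + g a‖ ^ 2 ∂μ) ≤ √(∫ a, ‖f a‖ ^ 2 ∂μ) + √(∫ a, ‖g a‖ ^ 2 ∂μ) := by
  have hfg : ∫ a, ‖f a + g a‖ ^ 2 ∂μ = ‖(hf.add hg).toLp (f + g)‖ ^ 2 :=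
    (hf.add hg).integral_norm_sq_eq
  rw [hfg, hf.integral_norm_sq_eq, hg.integral_norm_sq_eq, MemLp.toLp_add hf hg,
    Real.sqrt_sq (norm_nonneg _), Real.sqrt_sq (norm_nonneg _), Real.sqrt_sq (norm_nonneg _)]
  exact norm_add_le _ _

theorem norm_sub_sq_eq_norm_sub_condExpL2_sq_add [CompleteSpace E] {m m₀ : MeasurableSpace α}
    {μ : Measure α} (hm : m ≤ m₀) (f g : α →₂[μ] E) (hg : AEStronglyMeasurable[m] g μ) :
    ‖f - g‖ ^ 2 = ‖f - condExpL2 E ℝ hm f‖ ^ 2 + ‖(condExpL2 E ℝ hm f : α →₂[μ] E) - g‖ ^ 2 := by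
  set Pf : α →₂[μ] E := (condExpL2 E ℝ hm f : α →₂[μ] E)
  have hPg : AEStronglyMeasurable[m] (Pf - g : α →₂[μ] E) μ :=
    ((aestronglyMeasurable_condExpL2 hm f).sub hg).congr (Lp.coeFn_sub Pf g).symm
  have horth : inner ℝ (f - Pf) (Pf - g) = 0 := by
    rw [inner_sub_left, inner_condExpL2_eq_inner_fun hm f _ hPg, sub_self]
  rw [← sub_add_sub_cancel f Pf g, norm_add_sq_real, horth, mul_zero, add_zero]

theorem integral_norm_sub_sq_eq_add_condExp [CompleteSpace E] {m m₀ : MeasurableSpace α}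
    {μ : Measure α} [IsFiniteMeasure μ] (hm : m ≤ m₀) {f g : α → E}
    (hf : MemLp f 2 μ) (hg : MemLp g 2 μ) (hgm : AEStronglyMeasurable[m] g μ) :
    ∫ a, ‖f a - g a‖ ^ 2 ∂μ
      = ∫ a, ‖f a - μ[f | m] a‖ ^ 2 ∂μ + ∫ a, ‖μ[f | m] a - g a‖ ^ 2 ∂μ := by
  have hPf : MemLp (μ[f | m]) 2 μ := hf.condExp one_le_two
  have hPf_toLp : hPf.toLp _ = (condExpL2 E ℝ hm (hf.toLp f) : α →₂[μ] E) :=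
    Lp.ext (hPf.coeFn_toLp.trans (hf.condExpL2_ae_eq_condExp hm).symm)
  have hg_toLp : AEStronglyMeasurable[m] (hg.toLp g) μ := hgm.congr hg.coeFn_toLp.symm
  have h₁ : ∫ a, ‖f a - g a‖ ^ 2 ∂μ = ‖hf.toLp f - hg.toLp g‖ ^ 2 := by
    rw [← MemLp.toLp_sub]; exact (hf.sub hg).integral_norm_sq_eq
  have h₂ : ∫ a, ‖f a - μ[f | m] a‖ ^ 2 ∂μ = ‖hf.toLp f - hPf.toLp _‖ ^ 2 := by
    rw [← MemLp.toLp_sub]; exact (hf.sub hPf).integral_norm_sq_eq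
  have h₃ : ∫ a, ‖μ[f | m] a - g a‖ ^ 2 ∂μ = ‖hPf.toLp _ - hg.toLp g‖ ^ 2 := by
    rw [← MemLp.toLp_sub]; exact (hPf.sub hg).integral_norm_sq_eq
  rw [h₁, h₂, h₃, hPf_toLp]
  exact norm_sub_sq_eq_norm_sub_condExpL2_sq_add hm _ _ hg_toLp

end L2

section Gluing

variable {α β γ : Type*} [MeasurableSpace α] [MeasurableSpace β] [MeasurableSpace γ]

theorem MeasureTheory.Measure.map_prodMap_compProd_comap (μ : Measure α) [SFinite μ]
    (κ : Kernel β γ) [IsSFiniteKernel κ] {f : α → β} (hf : Measurable f) :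
    (μ ⊗ₘ κ.comap f hf).map (Prod.map f id) = μ.map f ⊗ₘ κ := by
  ext s hs
  rw [Measure.map_apply (hf.prodMap measurable_id) hs,
    Measure.compProd_apply (hf.prodMap measurable_id hs), Measure.compProd_apply hs,
    lintegral_map (Kernel.measurable_kernel_prodMk_left hs) hf]
  rfl

theorem MeasureTheory.Measure.exists_glue [StandardBorelSpace γ] [Nonempty γ]
    (π : Measure (α × β)) [SFinite π] (ρ : Measure (β × γ)) [IsFiniteMeasure ρ]
    (h : π.snd = ρ.fst) :
    ∃ τ : Measure ((α × β) × γ), τ.fst = π ∧ τ.map (Prod.map Prod.snd id) = ρ :=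
  ⟨π ⊗ₘ ρ.condKernel.comap Prod.snd measurable_snd, Measure.fst_compProd _ _, by
    rw [Measure.map_prodMap_compProd_comap, ← Measure.snd, h, Measure.disintegrate]⟩

end Gluing

-- A coupling of infinite cost has junk `quadCost = 0`, hence the `L²` hypotheses below.
noncomputable def quadCost {E : Type*} [SeminormedAddCommGroup E] [MeasurableSpace E]
    (π : Measure (E × E)) : ℝ :=
  ∫ z, ‖z.1 - z.2‖ ^ 2 ∂π

section Wasserstein

variable {n : ℕ}

local notation "ℝⁿ" => EuclideanSpace ℝ (Fin n)

theorem quadCost_map {Ω : Type*} [MeasurableSpace Ω] {ν : Measure Ω} {g : Ω → ℝⁿ × ℝⁿ}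
    (hg : AEMeasurable g ν) : quadCost (ν.map g) = ∫ ω, ‖(g ω).1 - (g ω).2‖ ^ 2 ∂ν :=
  integral_map hg (by fun_prop)

theorem W2sq_le_quadCost {p q : Measure ℝⁿ} {π : Measure (ℝⁿ × ℝⁿ)} (hπ₁ : π.fst = p)
    (hπ₂ : π.snd = q) : W2sq p q ≤ quadCost π :=
  csInf_le ⟨0, by rintro r ⟨π, -, -, rfl⟩; exact integral_nonneg fun _ => by positivity⟩
    ⟨π, hπ₁, hπ₂, rfl⟩

theorem le_sqrt_W2sq {p q : Measure ℝⁿ} [IsProbabilityMeasure p] [IsProbabilityMeasure q]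
    {c : ℝ} (h : ∀ π : Measure (ℝⁿ × ℝⁿ), π.fst = p → π.snd = q → c ≤ √(quadCost π)) :
    c ≤ √(W2sq p q) := by
  rcases le_or_gt c 0 with hc | hc
  · exact hc.trans (Real.sqrt_nonneg _)
  refine Real.le_sqrt_of_sq_le
    (le_csInf ⟨_, p.prod q, Measure.fst_prod, Measure.snd_prod, rfl⟩ ?_)
  rintro r ⟨π, hπ₁, hπ₂, rfl⟩
  exact (Real.le_sqrt' hc).1 (h π hπ₁ hπ₂)

theorem sqrt_W2sq_le_sqrt_quadCost_add {p q r : Measure ℝⁿ} {π ρ : Measure (ℝⁿ × ℝⁿ)}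
    [IsProbabilityMeasure q] (hπ₁ : π.fst = p) (hπ₂ : π.snd = q) (hρ₁ : ρ.fst = q)
    (hρ₂ : ρ.snd = r) (hπ : MemLp (fun z => z.1 - z.2) 2 π)
    (hρ : MemLp (fun z => z.1 - z.2) 2 ρ) :
    √(W2sq p r) ≤ √(quadCost π) + √(quadCost ρ) := by
  have hρ_fst : IsProbabilityMeasure ρ.fst := hρ₁ ▸ ‹_›
  have hπ_snd : IsProbabilityMeasure π.snd := hπ₂ ▸ ‹_›
  have : IsProbabilityMeasure ρ := @Measure.isProbabilityMeasure_of_map _ _ _ _ ρ _ hρ_fst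
  have : IsProbabilityMeasure π := @Measure.isProbabilityMeasure_of_map _ _ _ _ π _ hπ_snd
  obtain ⟨τ, hτπ, hτρ⟩ := π.exists_glue ρ (hπ₂.trans hρ₁.symm)
  have hτ₁ : MemLp (fun x : (ℝⁿ × ℝⁿ) × ℝⁿ => x.1.1 - x.1.2) 2 τ :=
    (hτπ ▸ hπ).comp_of_map (f := Prod.fst) measurable_fst.aemeasurable
  have hτ₂ : MemLp (fun x : (ℝⁿ × ℝⁿ) × ℝⁿ => x.1.2 - x.2) 2 τ :=
    (hτρ ▸ hρ).comp_of_map (f := Prod.map Prod.snd id) (by fun_prop)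
  have hg : Measurable fun x : (ℝⁿ × ℝⁿ) × ℝⁿ => (x.1.1, x.2) :=
    (measurable_fst.comp measurable_fst).prodMk measurable_snd
  have hcost : W2sq p r ≤ quadCost (τ.map fun x => (x.1.1, x.2)) := by
    refine W2sq_le_quadCost ?_ ?_
    · rw [Measure.fst_map_prodMk measurable_snd, ← hπ₁, ← hτπ, Measure.fst, Measure.fst,
        Measure.map_map measurable_fst measurable_fst]
      rfl
    · rw [Measure.snd_map_prodMk (X := fun x : (ℝⁿ × ℝⁿ) × ℝⁿ => x.1.1) (by fun_prop),
        ← hρ₂, ← hτρ, Measure.snd, Measure.map_map measurable_snd (by fun_prop)]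
      rfl
  calc √(W2sq p r) ≤ √(∫ x, ‖(x.1.1 - x.1.2) + (x.1.2 - x.2)‖ ^ 2 ∂τ) := by
        simpa only [sub_add_sub_cancel, quadCost_map hg.aemeasurable] using
          Real.sqrt_le_sqrt hcost
    _ ≤ √(∫ x, ‖x.1.1 - x.1.2‖ ^ 2 ∂τ) + √(∫ x, ‖x.1.2 - x.2‖ ^ 2 ∂τ) :=
        sqrt_integral_norm_add_sq_le hτ₁ hτ₂
    _ = √(quadCost π) + √(quadCost ρ) := by
        rw [← hτπ, ← hτρ, Measure.fst, quadCost_map measurable_fst.aemeasurable,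
          quadCost_map (by fun_prop)]
        rfl

theorem memLp_sub_of_coupling {p q : Measure ℝⁿ} {π : Measure (ℝⁿ × ℝⁿ)} (hπ₁ : π.fst = p)
    (hπ₂ : π.snd = q) (hp : MemLp id 2 p) (hq : MemLp id 2 q) :
    MemLp (fun z => z.1 - z.2) 2 π :=
  ((hπ₁ ▸ hp).comp_of_map measurable_fst.aemeasurable).sub
    ((hπ₂ ▸ hq).comp_of_map measurable_snd.aemeasurable)

theorem sqrt_W2sq_le_add {p q r : Measure ℝⁿ} [IsProbabilityMeasure p] [IsProbabilityMeasure q]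
    [IsProbabilityMeasure r] (hp : MemLp id 2 p) (hq : MemLp id 2 q) (hr : MemLp id 2 r) :
    √(W2sq p r) ≤ √(W2sq p q) + √(W2sq q r) := by
  suffices h : √(W2sq p r) - √(W2sq q r) ≤ √(W2sq p q) by linarith
  refine le_sqrt_W2sq fun π hπ₁ hπ₂ => ?_
  suffices h : √(W2sq p r) - √(quadCost π) ≤ √(W2sq q r) by linarith
  refine le_sqrt_W2sq fun ρ hρ₁ hρ₂ => ?_
  have := sqrt_W2sq_le_sqrt_quadCost_add hπ₁ hπ₂ hρ₁ hρ₂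
    (memLp_sub_of_coupling hπ₁ hπ₂ hp hq) (memLp_sub_of_coupling hρ₁ hρ₂ hq hr)
  linarith

theorem W2sq_map_le_integral_norm_sub_sq {Ω : Type*} [MeasurableSpace Ω] {μ : Measure Ω}
    {Y Z : Ω → ℝⁿ} (hY : AEMeasurable Y μ) (hZ : AEMeasurable Z μ) :
    W2sq (μ.map Y) (μ.map Z) ≤ ∫ ω, ‖Y ω - Z ω‖ ^ 2 ∂μ :=
  (W2sq_le_quadCost (Measure.fst_map_prodMk₀ hZ) (Measure.snd_map_prodMk₀ hY)).trans_eq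
    (quadCost_map (hY.prodMk hZ))

theorem memLp_id_map {Ω : Type*} [MeasurableSpace Ω] {μ : Measure Ω} {Y : Ω → ℝⁿ}
    (hY : MemLp Y 2 μ) : MemLp id 2 (μ.map Y) :=
  (memLp_map_measure_iff aestronglyMeasurable_id hY.aemeasurable).2 hY

end Wasserstein

theorem stmt_16_general {Ω β : Type*} [MeasurableSpace Ω] [MeasurableSpace β]
    {μ : Measure Ω} [IsProbabilityMeasure μ] {n : ℕ}
    (X : Ω → EuclideanSpace ℝ (Fin n)) (m : Ω → β)
    (hm : Measurable m) (hX2 : MemLp X 2 μ)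
    (Xt : Ω → EuclideanSpace ℝ (Fin n))
    (hXt : Xt = μ[X | MeasurableSpace.comap m inferInstance])
    (f : EuclideanSpace ℝ (Fin n) → EuclideanSpace ℝ (Fin n)) (hf : Measurable f)
    (hf2 : MemLp (fun ω => f (Xt ω)) 2 μ)
    (D₀ P : ℝ)
    (hD₀ : ∫ ω, ‖X ω - Xt ω‖ ^ 2 ∂μ = D₀)
    (hperc : Real.sqrt (W2sq (μ.map X) (μ.map (fun ω => f (Xt ω)))) ≤ Real.sqrt P) :
    D₀ + (max (Real.sqrt (W2sq (μ.map X) (μ.map Xt)) - Real.sqrt P) 0) ^ 2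
      ≤ ∫ ω, ‖X ω - f (Xt ω)‖ ^ 2 ∂μ := by
  have hXt_meas : StronglyMeasurable[MeasurableSpace.comap m inferInstance] Xt :=
    hXt ▸ stronglyMeasurable_condExp
  have hXt2 : MemLp Xt 2 μ := hXt ▸ hX2.condExp one_le_two
  have hfXt_meas :
      StronglyMeasurable[MeasurableSpace.comap m inferInstance] fun ω => f (Xt ω) :=
    (hf.comp hXt_meas.measurable).stronglyMeasurable
  have hpyth : ∫ ω, ‖X ω - f (Xt ω)‖ ^ 2 ∂μ = D₀ + ∫ ω, ‖f (Xt ω) - Xt ω‖ ^ 2 ∂μ := by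
    rw [integral_norm_sub_sq_eq_add_condExp hm.comap_le hX2 hf2 hfXt_meas.aestronglyMeasurable,
      ← hXt, hD₀]
    simp only [norm_sub_rev]
  have : IsProbabilityMeasure (μ.map X) := Measure.isProbabilityMeasure_map hX2.aemeasurable
  have : IsProbabilityMeasure (μ.map Xt) := Measure.isProbabilityMeasure_map hXt2.aemeasurable
  have : IsProbabilityMeasure (μ.map fun ω => f (Xt ω)) :=
    Measure.isProbabilityMeasure_map hf2.aemeasurable
  have htri : √(W2sq (μ.map X) (μ.map Xt)) ≤ √P + √(∫ ω, ‖f (Xt ω) - Xt ω‖ ^ 2 ∂μ) :=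
    (sqrt_W2sq_le_add (memLp_id_map hX2) (memLp_id_map hf2) (memLp_id_map hXt2)).trans
      (add_le_add hperc (Real.sqrt_le_sqrt
        (W2sq_map_le_integral_norm_sub_sq hf2.aemeasurable hXt2.aemeasurable)))
  have hgap :
      max (√(W2sq (μ.map X) (μ.map Xt)) - √P) 0 ≤ √(∫ ω, ‖f (Xt ω) - Xt ω‖ ^ 2 ∂μ) :=
    max_le (by linarith) (Real.sqrt_nonneg _)
  rw [hpyth]
  gcongr
  exact (pow_le_pow_left₀ (le_max_right _ _) hgap 2).trans_eq
    (Real.sq_sqrt (integral_nonneg fun _ => by positivity))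

/-- Distortion-perception tradeoff at a given encoder: if `X̃ = E[X|m]` has
`E[‖X − X̃‖²] = D₀` and the reconstruction `X̂ = f(X̃)` satisfies the perception constraint
`W₂(P_X, P_X̂) ≤ √P`, then `E[‖X − X̂‖²] ≥ D₀ + ((W₂(P_X, P_X̃) − √P)₊)²`. -/
theorem stmt_16 {Ω β : Type*} [MeasurableSpace Ω] [MeasurableSpace β]
    {μ : Measure Ω} [IsProbabilityMeasure μ] {n : ℕ}
    (X : Ω → EuclideanSpace ℝ (Fin n)) (m : Ω → β)
    (hX : Measurable X) (hm : Measurable m) (hX2 : MemLp X 2 μ)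
    (Xt : Ω → EuclideanSpace ℝ (Fin n))
    (hXt : Xt = μ[X | MeasurableSpace.comap m inferInstance])
    (f : EuclideanSpace ℝ (Fin n) → EuclideanSpace ℝ (Fin n)) (hf : Measurable f)
    (hf2 : MemLp (fun ω => f (Xt ω)) 2 μ)
    (D₀ P : ℝ) (hP : 0 ≤ P)
    (hD₀ : ∫ ω, ‖X ω - Xt ω‖ ^ 2 ∂μ = D₀)
    (hperc : Real.sqrt (W2sq (μ.map X) (μ.map (fun ω => f (Xt ω)))) ≤ Real.sqrt P) :
    D₀ + (max (Real.sqrt (W2sq (μ.map X) (μ.map Xt)) - Real.sqrt P) 0) ^ 2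
      ≤ ∫ ω, ‖X ω - f (Xt ω)‖ ^ 2 ∂μ :=
  stmt_16_general X m hm hX2 Xt hXt f hf hf2 D₀ P hD₀ hperc
end
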